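/- arXiv:2012.14755 — 4 statements merged into one kernel-verified Lean document; each statement's English description precedes it below -/
import Mathlib

section
/- In an SSP-MDP satisfying the standing assumptions, if the policy π is proper, then its value function V^π is the unique solution of the Bellman equations V^π(s) = c(s, π(s)) + Σ_{s'} p(s'|s,π(s)) V^π(s') for all non-goal states s. -/
open Filter Matrix

section Aux

variable {S : Type*} [Fintype S] [DecidableEq S]

private lemma mulVec_apply' (A : Matrix S S ℝ) (x : S → ℝ) (s : S) :
    A.mulVec x s = ∑ s', A s s' * x s' := by
  simp [Matrix.mulVec, dotProduct]

private lemma pow_entry_nonneg {P : Matrix S S ℝ} (hP0 : ∀ s s', 0 ≤ P s s') :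
    ∀ n s s', 0 ≤ (P ^ n) s s' := by
  intro n
  induction n with
  | zero => intro s s'; simp [Matrix.one_apply]; positivity
  | succ n ih =>
      intro s s'
      rw [pow_succ, Matrix.mul_apply]
      exact Finset.sum_nonneg fun j _ => mul_nonneg (ih s j) (hP0 j s')

private lemma mulVec_mono {Q : Matrix S S ℝ} (hQ : ∀ s s', 0 ≤ Q s s')
    {x y : S → ℝ} (hxy : ∀ s, x s ≤ y s) (s : S) :
    Q.mulVec x s ≤ Q.mulVec y s := by
  rw [mulVec_apply', mulVec_apply']
  exact Finset.sum_le_sum fun j _ => mul_le_mul_of_nonneg_left (hxy j) (hQ s j)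

private lemma mulVec_nonneg {Q : Matrix S S ℝ} (hQ : ∀ s s', 0 ≤ Q s s')
    {x : S → ℝ} (hx : ∀ s, 0 ≤ x s) (s : S) : 0 ≤ Q.mulVec x s := by
  rw [mulVec_apply']
  exact Finset.sum_nonneg fun j _ => mul_nonneg (hQ s j) (hx j)

private lemma mulVec_const {Q : Matrix S S ℝ} (a : ℝ) (s : S) :
    Q.mulVec (fun _ => a) s = (∑ s', Q s s') * a := by
  rw [mulVec_apply', Finset.sum_mul]

end Aux

/-- Bertsekas, part 2. In an SSP-MDP (sub-stochastic policy matrix `P`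
on the non-goal states, costs `c s ∈ [cmin,1]`, `cmin > 0`), if the policy is proper
(survival probabilities `(P^n) 1 → 0`), then its value function
`V^π s = ∑' n, ((P^n) c) s` is the unique solution of the Bellman equations
`V(s) = c(s) + Σ_{s'} P(s,s') V(s')`. -/
theorem stmt_3 {S : Type*} [Fintype S] [DecidableEq S]
    (P : Matrix S S ℝ) (c : S → ℝ) (cmin : ℝ)
    (hP0 : ∀ s s', 0 ≤ P s s') (hProw : ∀ s, ∑ s', P s s' ≤ 1)
    (hcmin : 0 < cmin) (hc : ∀ s, cmin ≤ c s ∧ c s ≤ 1)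
    (hproper : Tendsto (fun n => (P ^ n).mulVec (fun _ => (1 : ℝ))) atTop (nhds 0)) :
    (∀ s, (∑' n : ℕ, ((P ^ n).mulVec c) s)
        = c s + P.mulVec (fun s' => ∑' n : ℕ, ((P ^ n).mulVec c) s') s) ∧
      ∀ W : S → ℝ, (∀ s, W s = c s + P.mulVec W s) →
        W = fun s => ∑' n : ℕ, ((P ^ n).mulVec c) s := by
  -- survival probabilities
  set A : ℕ → S → ℝ := fun n => (P ^ n).mulVec (fun _ => (1 : ℝ)) with hA
  have hPn0 : ∀ n s s', 0 ≤ (P ^ n) s s' := pow_entry_nonneg hP0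
  -- substochasticity of powers: 0 ≤ A n s ≤ 1
  have hA0 : ∀ n s, 0 ≤ A n s := fun n s =>
    mulVec_nonneg (hPn0 n) (fun _ => zero_le_one) s
  have hArow : ∀ n s, A n s = ∑ s', (P ^ n) s s' := by
    intro n s; rw [hA]; simp only []; rw [mulVec_const, mul_one]
  have hA1 : ∀ n s, A n s ≤ 1 := by
    intro n
    induction n with
    | zero => intro s; simp [hA, Matrix.one_mulVec]
    | succ n ih =>
        intro s
        have h1 : A (n + 1) s = P.mulVec (A n) s := by
          simp only [hA, pow_succ', Matrix.mulVec_mulVec]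
        have h2 : P.mulVec (A n) s ≤ P.mulVec (fun _ => (1 : ℝ)) s :=
          mulVec_mono hP0 ih s
        have h3 : P.mulVec (fun _ => (1 : ℝ)) s ≤ 1 := by
          rw [mulVec_const]
          simpa using hProw s
        linarith [h1, h2, h3]
  -- obtain N > 0 with A N s ≤ 1/2 for all s
  obtain ⟨N, hN0, hNhalf⟩ : ∃ N : ℕ, 0 < N ∧ ∀ s, A N s ≤ 1 / 2 := by
    have := (Metric.tendsto_atTop.mp hproper) (1 / 2) (by norm_num)
    obtain ⟨N0, hN0⟩ := this
    refine ⟨N0 + 1, Nat.succ_pos _, fun s => ?_⟩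
    have hd := hN0 (N0 + 1) (Nat.le_succ _)
    have : dist (A (N0 + 1) s) ((0 : S → ℝ) s) < 1 / 2 := by
      have := (dist_pi_lt_iff (by norm_num : (0:ℝ) < 1/2)).mp hd s
      exact this
    rw [Real.dist_eq] at this
    simp only [Pi.zero_apply, sub_zero] at this
    have := abs_lt.mp this
    linarith [this.2]
  -- geometric decay: A n s ≤ (1/2)^(n / N)
  have hgeom : ∀ n s, A n s ≤ (1 / 2 : ℝ) ^ (n / N) := by
    intro n
    induction n using Nat.strong_induction_on with
    | _ n ih =>
      intro s
      by_cases hn : n < N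
      · rw [Nat.div_eq_of_lt hn]
        simpa using hA1 n s
      · push_neg at hn
        obtain ⟨m, rfl⟩ : ∃ m, n = N + m := ⟨n - N, (Nat.add_sub_cancel' hn).symm⟩
        have hlt : m < N + m := by omega
        have h1 : A (N + m) = (P ^ N).mulVec (A m) := by
          simp only [hA, pow_add, Matrix.mulVec_mulVec]
        have h2 : (P ^ N).mulVec (A m) s
            ≤ (P ^ N).mulVec (fun _ => (1 / 2 : ℝ) ^ (m / N)) s :=
          mulVec_mono (hPn0 N) (fun s' => ih m hlt s') s
        have h3 : (P ^ N).mulVec (fun _ => (1 / 2 : ℝ) ^ (m / N)) s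
            = (1 / 2 : ℝ) ^ (m / N) * A N s := by
          rw [mulVec_const, hArow, mul_comm]
        have h4 : (1 / 2 : ℝ) ^ (m / N) * A N s
            ≤ (1 / 2 : ℝ) ^ (m / N) * (1 / 2) :=
          mul_le_mul_of_nonneg_left (hNhalf s) (by positivity)
        have h5 : (N + m) / N = m / N + 1 := by
          rw [add_comm, Nat.add_div_right _ hN0]
        rw [h1, h5, pow_succ]
        calc (P ^ N).mulVec (A m) s ≤ _ := h2
          _ = _ := h3
          _ ≤ _ := h4
  -- geometric comparison: (1/2)^(n/N) ≤ 2 * β^n with β = (1/2)^(1/N) < 1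
  set β : ℝ := (1 / 2 : ℝ) ^ ((N : ℝ)⁻¹) with hβ
  have hβ0 : 0 < β := Real.rpow_pos_of_pos (by norm_num) _
  have hβ1 : β < 1 := by
    apply Real.rpow_lt_one (by norm_num) (by norm_num)
    positivity
  have hcomp : ∀ n : ℕ, (1 / 2 : ℝ) ^ (n / N) ≤ 2 * β ^ n := by
    intro n
    have hβn : β ^ n = (1 / 2 : ℝ) ^ ((n : ℝ) * (N : ℝ)⁻¹) := by
      rw [hβ, ← Real.rpow_natCast ((1 / 2 : ℝ) ^ ((N : ℝ)⁻¹)) n,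
        ← Real.rpow_mul (by norm_num), mul_comm]
    have hexp : (n : ℝ) * (N : ℝ)⁻¹ - 1 ≤ ((n / N : ℕ) : ℝ) := by
      have hmod : n < (n / N) * N + N := by
        have h1 : n / N * N + n % N = n := Nat.div_add_mod' n N
        have h2 := Nat.mod_lt n hN0
        omega
      have hmodR : (n : ℝ) < ((n / N : ℕ) : ℝ) * N + N := by
        exact_mod_cast hmod
      have hNpos : (0 : ℝ) < N := by exact_mod_cast hN0
      rw [sub_le_iff_le_add, inv_eq_one_div, mul_one_div, div_le_iff₀ hNpos]
      have hexpand : (((n / N : ℕ) : ℝ) + 1) * N = ((n / N : ℕ) : ℝ) * N + N := by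
        ring
      rw [hexpand]
      linarith
    have h1 : (1 / 2 : ℝ) ^ ((n / N : ℕ) : ℝ)
        ≤ (1 / 2 : ℝ) ^ ((n : ℝ) * (N : ℝ)⁻¹ - 1) :=
      Real.rpow_le_rpow_of_exponent_ge (by norm_num) (by norm_num) hexp
    have h2 : (1 / 2 : ℝ) ^ ((n : ℝ) * (N : ℝ)⁻¹ - 1)
        = 2 * β ^ n := by
      rw [Real.rpow_sub (by norm_num), Real.rpow_one, hβn]
      ring
    rw [← h2, ← Real.rpow_natCast (1/2 : ℝ) (n / N)]
    exact h1
  -- summability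
  have hcle : ∀ n s, ((P ^ n).mulVec c) s ≤ A n s := fun n s =>
    mulVec_mono (hPn0 n) (fun s' => (hc s').2) s
  have hc0 : ∀ n s, 0 ≤ ((P ^ n).mulVec c) s := fun n s =>
    mulVec_nonneg (hPn0 n) (fun s' => le_of_lt (lt_of_lt_of_le hcmin (hc s').1)) s
  have hgeomSummable : Summable (fun n : ℕ => 2 * β ^ n) :=
    (summable_geometric_of_lt_one hβ0.le hβ1).mul_left 2
  have hsumm : ∀ s, Summable (fun n : ℕ => ((P ^ n).mulVec c) s) := by
    intro s
    apply Summable.of_nonneg_of_le (fun n => hc0 n s) (fun n => ?_) hgeomSummable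
    exact le_trans (hcle n s) (le_trans (hgeom n s) (hcomp n))
  -- Bellman equation
  have hBellman : ∀ s, (∑' n : ℕ, ((P ^ n).mulVec c) s)
      = c s + P.mulVec (fun s' => ∑' n : ℕ, ((P ^ n).mulVec c) s') s := by
    intro s
    have hshift : (∑' n : ℕ, ((P ^ n).mulVec c) s)
        = ((P ^ 0).mulVec c) s + ∑' n : ℕ, ((P ^ (n + 1)).mulVec c) s :=
      Summable.tsum_eq_zero_add (hsumm s)
    have h0 : ((P ^ 0).mulVec c) s = c s := by simp [Matrix.one_mulVec]
    have hswap : P.mulVec (fun s' => ∑' n : ℕ, ((P ^ n).mulVec c) s') s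
        = ∑' n : ℕ, ((P ^ (n + 1)).mulVec c) s := by
      rw [mulVec_apply']
      have h1 : ∀ s', P s s' * (∑' n : ℕ, ((P ^ n).mulVec c) s')
          = ∑' n : ℕ, P s s' * ((P ^ n).mulVec c) s' := fun s' =>
        (tsum_mul_left).symm
      simp_rw [h1]
      rw [← Summable.tsum_finsetSum (fun s' _ => (hsumm s').mul_left _)]
      congr 1
      funext n
      rw [← mulVec_apply' P ((P ^ n).mulVec c) s, Matrix.mulVec_mulVec, ← pow_succ']
    rw [hshift, h0, hswap]
  constructor
  · exact hBellman
  · intro W hW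
    funext s
    set V : S → ℝ := fun s => ∑' n : ℕ, ((P ^ n).mulVec c) s with hV
    set D : S → ℝ := fun s => W s - V s with hD
    have hDrec : ∀ s, D s = P.mulVec D s := by
      intro s
      have h1 := hW s
      have h2 := hBellman s
      have h3 : P.mulVec D s = P.mulVec W s - P.mulVec V s := by
        rw [hD]
        rw [mulVec_apply', mulVec_apply', mulVec_apply', ← Finset.sum_sub_distrib]
        congr 1; ext j; ring
      simp only [hD]
      rw [h3]
      linarith [h1, h2]
    have hDpow : ∀ n s, D s = (P ^ n).mulVec D s := by
      intro n
      induction n with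
      | zero => intro s; simp [Matrix.one_mulVec]
      | succ n ih =>
          intro s
          have : (P ^ (n + 1)).mulVec D = (P ^ n).mulVec (P.mulVec D) := by
            rw [pow_succ, Matrix.mulVec_mulVec]
          rw [this]
          have hPD : P.mulVec D = D := funext fun s' => (hDrec s').symm
          rw [hPD]
          exact ih s
    set M : ℝ := ∑ s', |D s'| with hM
    have hDM : ∀ s', |D s'| ≤ M :=
      fun s' => Finset.single_le_sum (fun j _ => abs_nonneg (D j)) (Finset.mem_univ s')
    have hbound : ∀ n, |D s| ≤ M * A n s := by
      intro n
      rw [hDpow n s, mulVec_apply']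
      calc |∑ s', (P ^ n) s s' * D s'| ≤ ∑ s', |(P ^ n) s s' * D s'| :=
            Finset.abs_sum_le_sum_abs _ _
        _ = ∑ s', (P ^ n) s s' * |D s'| := by
            congr 1; ext s'; rw [abs_mul, abs_of_nonneg (hPn0 n s s')]
        _ ≤ ∑ s', (P ^ n) s s' * M :=
            Finset.sum_le_sum fun j _ =>
              mul_le_mul_of_nonneg_left (hDM j) (hPn0 n s j)
        _ = M * A n s := by rw [← Finset.sum_mul, ← hArow, mul_comm]
    have hlim : Tendsto (fun n => M * A n s) atTop (nhds 0) := by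
      have := hproper
      have hco : Tendsto (fun n => A n s) atTop (nhds 0) := by
        have := tendsto_pi_nhds.mp hproper s
        simpa [hA] using this
      simpa using hco.const_mul M
    have : |D s| ≤ 0 := ge_of_tendsto' hlim (fun n => hbound n)
    have : D s = 0 := abs_eq_zero.mp (le_antisymm this (abs_nonneg _))
    simp only [hD, sub_eq_zero] at this
    exact this
end

section
/- Let u = u_j be the output of SSP value iteration stopped when ||u_{j+1} - u_j||_∞ ≤ γ with γ ≤ c_min/2, and π the greedy policy w.r.t. u. Then the true value function of π satisfies V^π ≤ (1 + 2γ/c_min) · u component-wise. -/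
open Filter Matrix

/-- The transition matrix induced by a Markov policy `π`. -/
def polMat {S A : Type*} (p : S → A → S → ℝ) (π : S → A) : Matrix S S ℝ :=
  Matrix.of fun s s' => p s (π s) s'

/-- Value function of a policy in an SSP-MDP (expected cumulative cost to the goal). -/
noncomputable def polVal {S A : Type*} [Fintype S] [DecidableEq S]
    (p : S → A → S → ℝ) (c : S → A → ℝ) (π : S → A) (s : S) : ℝ :=
  ∑' n : ℕ, ((polMat p π ^ n).mulVec fun s' => c s' (π s')) s

/-- A policy is proper if its survival probabilities tend to zero. -/
def polProper {S A : Type*} [Fintype S] [DecidableEq S]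
    (p : S → A → S → ℝ) (π : S → A) : Prop :=
  Tendsto (fun n => (polMat p π ^ n).mulVec fun _ => (1 : ℝ)) atTop (nhds 0)

/-!
With `α = 1 + 2γ/cmin`, the scaled iterate `α • u j` is a supersolution of the Bellman equation
of the greedy policy: the stopping rule gives `c_π + P_π u ≤ u + γ`, and multiplying by `α` turns
the slack `αγ` into at most `2γ = (α - 1) cmin ≤ (α - 1) c_π`. Unrolling `c_π + P_π w ≤ w` bounds
every partial sum of `∑ₙ P_πⁿ c_π` by `w`, since the nonnegative tail `P_πᴺ w` can be dropped.
-/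

open Finset

namespace Matrix

variable {S : Type*} [Fintype S]

theorem mulVec_mono_of_nonneg {P : Matrix S S ℝ} (hP : ∀ i j, 0 ≤ P i j) {v w : S → ℝ}
    (h : v ≤ w) : P *ᵥ v ≤ P *ᵥ w := fun i =>
  sum_le_sum fun j _ => mul_le_mul_of_nonneg_left (h j) (hP i j)

variable [DecidableEq S] {P : Matrix S S ℝ} {c w : S → ℝ}

theorem sum_range_pow_mulVec_add_le (hP : ∀ i j, 0 ≤ P i j) (hw : c + P *ᵥ w ≤ w) (N : ℕ) :
    ∑ n ∈ range N, P ^ n *ᵥ c + P ^ N *ᵥ w ≤ w := by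
  induction N with
  | zero => simp
  | succ N ih =>
    have hstep : P ^ N *ᵥ c + P ^ (N + 1) *ᵥ w ≤ P ^ N *ᵥ w := by
      rw [pow_succ, ← mulVec_mulVec, ← mulVec_add]
      exact mulVec_mono_of_nonneg (pow_apply_nonneg hP N) hw
    calc ∑ n ∈ range (N + 1), P ^ n *ᵥ c + P ^ (N + 1) *ᵥ w
        = ∑ n ∈ range N, P ^ n *ᵥ c + (P ^ N *ᵥ c + P ^ (N + 1) *ᵥ w) := by
          rw [sum_range_succ, add_assoc]
      _ ≤ ∑ n ∈ range N, P ^ n *ᵥ c + P ^ N *ᵥ w := add_le_add_right hstep _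
      _ ≤ w := ih

theorem tsum_pow_mulVec_le (hP : ∀ i j, 0 ≤ P i j) (hc : 0 ≤ c) (hw0 : 0 ≤ w)
    (hw : c + P *ᵥ w ≤ w) (s : S) : ∑' n, (P ^ n *ᵥ c) s ≤ w s := by
  have hnonneg {v : S → ℝ} (hv : 0 ≤ v) (n : ℕ) : 0 ≤ (P ^ n *ᵥ v) s := by
    simpa using mulVec_mono_of_nonneg (pow_apply_nonneg hP n) hv s
  refine Real.tsum_le_of_sum_range_le (hnonneg hc) fun N => ?_
  have := sum_range_pow_mulVec_add_le hP hw N s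
  simp only [Pi.add_apply, Finset.sum_apply] at this
  linarith [hnonneg hw0 N]

end Matrix

theorem valueIteration_nonneg {S A : Type*} [Fintype S] (p : S → A → S → ℝ) (c : S → A → ℝ)
    (hp0 : ∀ s a s', 0 ≤ p s a s') (hc0 : ∀ s a, 0 ≤ c s a) (L : (S → ℝ) → S → ℝ)
    (hL : ∀ u s, L u s = ⨅ a : A, (c s a + ∑ s', p s a s' * u s'))
    (u : ℕ → S → ℝ) (hu0 : u 0 = 0) (hu : ∀ i, u (i + 1) = L (u i)) (i : ℕ) : 0 ≤ u i := by
  induction i with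
  | zero => rw [hu0]
  | succ i ih =>
    intro s
    rw [hu, hL]
    exact Real.iInf_nonneg fun a =>
      add_nonneg (hc0 s a) (sum_nonneg fun s' _ => mul_nonneg (hp0 s a s') (ih s'))

theorem polVal_le_of_bellman_le {S A : Type*} [Fintype S] [DecidableEq S]
    (p : S → A → S → ℝ) (c : S → A → ℝ) (π : S → A) (hp0 : ∀ s a s', 0 ≤ p s a s')
    (hc0 : ∀ s, 0 ≤ c s (π s)) {w : S → ℝ} (hw0 : 0 ≤ w)
    (hw : ∀ s, c s (π s) + ∑ s', p s (π s) s' * w s' ≤ w s) (s : S) :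
    polVal p c π s ≤ w s :=
  Matrix.tsum_pow_mulVec_le (fun s s' => hp0 s (π s) s') hc0 hw0 hw s

theorem add_mul_le_mul_of_le_add {cmin γ x y v : ℝ} (hcmin : 0 < cmin) (hγ0 : 0 ≤ γ)
    (hγ : γ ≤ cmin / 2) (hx : cmin ≤ x) (h : x + y ≤ v + γ) :
    x + (1 + 2 * γ / cmin) * y ≤ (1 + 2 * γ / cmin) * v := by
  set t := 2 * γ / cmin
  have ht : t * cmin = 2 * γ := div_mul_cancel₀ _ hcmin.ne'
  have ht0 : 0 ≤ t := by positivity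
  have ht1 : t ≤ 1 := (div_le_one hcmin).mpr (by linarith)
  nlinarith [mul_le_mul_of_nonneg_left hx ht0, mul_le_mul_of_nonneg_right ht1 hγ0,
    mul_le_mul_of_nonneg_left h (by linarith : (0 : ℝ) ≤ 1 + t)]

theorem stmt_5_general {S A : Type*} [Fintype S] [DecidableEq S]
    (p : S → A → S → ℝ) (c : S → A → ℝ) (cmin γ : ℝ)
    (hp0 : ∀ s a s', 0 ≤ p s a s')
    (hcmin : 0 < cmin) (hc : ∀ s a, cmin ≤ c s a ∧ c s a ≤ 1)
    (hγhalf : γ ≤ cmin / 2)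
    (L : (S → ℝ) → S → ℝ)
    (hL : ∀ u s, L u s = ⨅ a : A, (c s a + ∑ s', p s a s' * u s'))
    (u : ℕ → S → ℝ) (hu0 : u 0 = 0) (hu : ∀ i, u (i + 1) = L (u i))
    (j : ℕ) (hstop : ∀ s, |u (j + 1) s - u j s| ≤ γ)
    (π : S → A)
    (hπ : ∀ s, c s (π s) + ∑ s', p s (π s) s' * u j s' = L (u j) s) :
    ∀ s, polVal p c π s ≤ (1 + 2 * γ / cmin) * u j s := by
  intro s₀
  have hγ0 : 0 ≤ γ := (abs_nonneg _).trans (hstop s₀)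
  have hc0 : ∀ s a, 0 ≤ c s a := fun s a => hcmin.le.trans (hc s a).1
  have hu_nonneg := valueIteration_nonneg p c hp0 hc0 L hL u hu0 hu j
  refine polVal_le_of_bellman_le p c π hp0 (fun s => hc0 s (π s))
    (w := fun s => (1 + 2 * γ / cmin) * u j s)
    (fun s => mul_nonneg (by positivity) (hu_nonneg s)) (fun s => ?_) s₀
  have hgap : c s (π s) + ∑ s', p s (π s) s' * u j s' ≤ u j s + γ := by
    rw [hπ, ← hu]
    linarith [(abs_le.mp (hstop s)).2]
  simpa only [mul_sum, mul_left_comm] using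
    add_mul_le_mul_of_le_add hcmin hγ0 hγhalf (hc s (π s)).1 hgap

/-- Let `u = u j` be the output of SSP value iteration stopped when
`‖u (j+1) - u j‖_∞ ≤ γ` with `γ ≤ cmin/2`, and `π` the greedy policy w.r.t. `u j`.
Then the true value function of `π` satisfies `V^π ≤ (1 + 2γ/cmin) · u` componentwise. -/
theorem stmt_5 {S A : Type*} [Fintype S] [DecidableEq S] [Fintype A] [Nonempty A]
    (p : S → A → S → ℝ) (c : S → A → ℝ) (cmin γ : ℝ)
    (hp0 : ∀ s a s', 0 ≤ p s a s') (hprow : ∀ s a, ∑ s', p s a s' ≤ 1)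
    (hcmin : 0 < cmin) (hc : ∀ s a, cmin ≤ c s a ∧ c s a ≤ 1)
    (hγ : 0 < γ) (hγhalf : γ ≤ cmin / 2)
    (hex : ∃ π0 : S → A, polProper p π0)
    (L : (S → ℝ) → S → ℝ)
    (hL : ∀ u s, L u s = ⨅ a : A, (c s a + ∑ s', p s a s' * u s'))
    (u : ℕ → S → ℝ) (hu0 : u 0 = 0) (hu : ∀ i, u (i + 1) = L (u i))
    (j : ℕ) (hstop : ∀ s, |u (j + 1) s - u j s| ≤ γ)
    (π : S → A)
    (hπ : ∀ s, c s (π s) + ∑ s', p s (π s) s' * u j s' = L (u j) s) :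
    ∀ s, polVal p c π s ≤ (1 + 2 * γ / cmin) * u j s :=
  stmt_5_general p c cmin γ hp0 hcmin hc hγhalf L hL u hu0 hu j hstop π hπ
end

section
/- If π is a proper policy in an SSP-MDP whose value function satisfies V_π(s) ≤ d for every non-goal state s, then for all m ≥ 0 the probability that the cumulative cost of π until reaching the goal, started from any state, exceeds m is at most 2 e^{-m/(4d)}. -/
open Filter Matrix

/-- SSP value function (expected cumulative cost until the goal) of the
policy-induced sub-stochastic transition matrix `P` with cost vector `c`. -/
noncomputable def sspVal {S : Type*} [Fintype S] [DecidableEq S]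
    (P : Matrix S S ℝ) (c : S → ℝ) (s : S) : ℝ :=
  ∑' n : ℕ, ((P ^ n).mulVec c) s

/-- Properness: survival probabilities vanish. -/
def sspProper {S : Type*} [Fintype S] [DecidableEq S] (P : Matrix S S ℝ) : Prop :=
  Tendsto (fun n => (P ^ n).mulVec fun _ => (1 : ℝ)) atTop (nhds 0)

open Classical in
/-- `exceedProb P c n m s` is the probability that, starting from `s`, the cumulative
cost accumulated by the policy until absorption at the goal — truncated to the first
`n` steps — exceeds `m`.  Since costs are positive, the probability that the total
cumulative cost exceeds `m` is the (monotone) limit over `n` of these quantities. -/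
noncomputable def exceedProb {S : Type*} [Fintype S] (P : Matrix S S ℝ) (c : S → ℝ) :
    ℕ → ℝ → S → ℝ
  | 0, m, _ => if m < 0 then 1 else 0
  | n + 1, m, s =>
      (1 - ∑ s', P s s') * (if m < c s then 1 else 0)
        + ∑ s', P s s' * exceedProb P c n (m - c s) s'

set_option linter.unusedSectionVars false
set_option linter.unusedVariables false
set_option linter.unnecessarySeqFocus false
set_option maxHeartbeats 1000000

namespace SSPAux

-- numeric facts
lemma exp3_le : Real.exp 3 ≤ 24 := by
  have e1 : Real.exp 1 < 2.7182818286 := Real.exp_one_lt_d9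
  have h3 : Real.exp 3 = (Real.exp 1)^3 := by
    rw [← Real.exp_nat_mul]; norm_num
  have hp : (Real.exp 1)^3 < 2.7182818286^3 := by
    apply pow_lt_pow_left₀ e1 (Real.exp_pos 1).le
    norm_num
  rw [h3]
  nlinarith
lemma exphalf_le : Real.exp (1/2) ≤ 2 := by
  have e1 : Real.exp 1 < 2.7182818286 := Real.exp_one_lt_d9
  have h2 : Real.exp (1/2) * Real.exp (1/2) = Real.exp 1 := by
    rw [← Real.exp_add]; norm_num
  nlinarith [Real.exp_pos (1/2 : ℝ)]
lemma e_le_3 : Real.exp 1 ≤ 3 := by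
  have := Real.exp_one_lt_d9; nlinarith


-- Region B inequality via convexity of exp
lemma regionB {y : ℝ} (h2 : 2 ≤ y) (h12 : y ≤ 12) : Real.exp (y/4) ≤ 2*y := by
  set t := (y - 2)/10 with ht
  have ht0 : 0 ≤ t := by rw [ht]; linarith
  have ht1 : t ≤ 1 := by rw [ht]; linarith
  have harg : y/4 = (1-t) * (1/2) + t * 3 := by rw [ht]; ring
  have hconv := convexOn_exp.2 (Set.mem_univ (1/2 : ℝ)) (Set.mem_univ (3 : ℝ))
      (by linarith : (0:ℝ) ≤ 1 - t) ht0 (by ring)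
  simp only [smul_eq_mul] at hconv
  rw [harg]
  calc Real.exp ((1-t) * (1/2) + t * 3)
      ≤ (1-t) * Real.exp (1/2) + t * Real.exp 3 := hconv
    _ ≤ (1-t) * 4 + t * 24 := by
        have h4 : Real.exp (1/2) ≤ 4 := by linarith [exphalf_le]
        have h24 := exp3_le
        have := mul_le_mul_of_nonneg_left h4 (by linarith : (0:ℝ) ≤ 1 - t)
        have := mul_le_mul_of_nonneg_left h24 ht0
        nlinarith
    _ = 2*y := by rw [ht]; ring


-- Region C inequality
lemma regionC {t : ℝ} (h3 : 3 ≤ t) : (9/4 : ℝ) * (1/3 : ℝ)^t ≤ 2 * Real.exp (-t) := by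
  have hexp : Real.exp (-t) = (Real.exp (-1))^t := by
    rw [Real.rpow_def_of_pos (Real.exp_pos _), Real.log_exp]
    ring_nf
  have key : ((1:ℝ)/3)^t ≤ (8/9) * (Real.exp (-1))^t := by
    rw [← div_le_iff₀ (by positivity : (0:ℝ) < (Real.exp (-1))^t)] at *
    have hdiv : ((1:ℝ)/3)^t / (Real.exp (-1))^t = ((1/3) / Real.exp (-1))^t := by
      rw [Real.div_rpow (by norm_num) (Real.exp_pos _).le]
    rw [hdiv]
    have hbase : (1/3 : ℝ) / Real.exp (-1) = Real.exp 1 / 3 := by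
      rw [Real.exp_neg]; field_simp
    rw [hbase]
    have hb1 : Real.exp 1 / 3 ≤ 1 := by linarith [e_le_3]
    have hb0 : 0 < Real.exp 1 / 3 := by positivity
    calc (Real.exp 1 / 3)^t ≤ (Real.exp 1 / 3)^(3:ℝ) :=
          Real.rpow_le_rpow_of_exponent_ge hb0 hb1 h3
      _ = (Real.exp 1 / 3)^(3:ℕ) := by
          rw [show ((3:ℝ)) = ((3:ℕ):ℝ) by norm_num, Real.rpow_natCast]
      _ = (Real.exp 1)^3 / 27 := by rw [div_pow]; norm_num
      _ ≤ 8/9 := by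
          have h3' : (Real.exp 1)^3 = Real.exp 3 := by
            rw [← Real.exp_nat_mul]; norm_num
          rw [h3']
          linarith [exp3_le]
  rw [hexp]
  nlinarith [Real.rpow_nonneg (by norm_num : (0:ℝ) ≤ 1/3) t,
    Real.rpow_nonneg (Real.exp_pos (-1)).le t]

theorem geomdiv_sum (N M : ℕ) :
    ∑ n ∈ Finset.range (N * M), ((1:ℝ)/2) ^ (n / N) = N * ∑ q ∈ Finset.range M, ((1:ℝ)/2) ^ q := by
  induction M with
  | zero => simp
  | succ M ih =>
    have hle : N * M ≤ N * (M + 1) := by nlinarith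
    rw [Finset.range_eq_Ico, ← Finset.sum_Ico_consecutive _ (Nat.zero_le (N*M)) hle]
    rw [← Finset.range_eq_Ico, ih]
    have hdiv : ∀ n ∈ Finset.Ico (N*M) (N*(M+1)), ((1:ℝ)/2) ^ (n / N) = ((1:ℝ)/2) ^ M := by
      intro n hn
      simp only [Finset.mem_Ico] at hn
      congr 1
      apply Nat.div_eq_of_lt_le
      · rw [Nat.mul_comm]; exact hn.1
      · calc n < N * (M+1) := hn.2
          _ = (M+1) * N := by ring
    rw [Finset.sum_congr rfl hdiv, Finset.sum_const, Nat.card_Ico]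
    rw [Finset.sum_range_succ]
    have h2 : N * (M+1) - N * M = N := by rw [Nat.mul_succ]; omega
    rw [h2]
    ring

variable {S : Type*} [Fintype S] [DecidableEq S] (P : Matrix S S ℝ) (c : S → ℝ)

lemma pow_entry_nonneg (hP0 : ∀ s s', 0 ≤ P s s') :
    ∀ (n : ℕ) (s s' : S), 0 ≤ (P ^ n) s s' := by
  intro n
  induction n with
  | zero => intro s s'; simp [Matrix.one_apply]; split <;> norm_num
  | succ n ih =>
    intro s s'
    rw [pow_succ, Matrix.mul_apply]
    exact Finset.sum_nonneg fun t _ => mul_nonneg (ih s t) (hP0 t s')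


lemma pow_mulVec_one_le (hP0 : ∀ s s', 0 ≤ P s s') (hProw : ∀ s, ∑ s', P s s' ≤ 1) :
    ∀ (n : ℕ) (s : S), (P ^ n).mulVec (fun _ => (1:ℝ)) s ≤ 1 := by
  intro n
  induction n with
  | zero => intro s; simp
  | succ n ih =>
    intro s
    rw [pow_succ', ← Matrix.mulVec_mulVec]
    calc P.mulVec ((P ^ n).mulVec fun _ => (1:ℝ)) s
        ≤ P.mulVec (fun _ => (1:ℝ)) s := by
          simp only [Matrix.mulVec, dotProduct]
          exact Finset.sum_le_sum fun t _ => mul_le_mul_of_nonneg_left (ih t) (hP0 s t)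
      _ = ∑ s', P s s' := by simp [Matrix.mulVec, dotProduct]
      _ ≤ 1 := hProw s

lemma exists_half (hproper : sspProper P) :
    ∃ N : ℕ, ∀ s : S, (P ^ N).mulVec (fun _ => (1:ℝ)) s ≤ 1/2 := by
  have h : ∀ s : S, ∀ᶠ n in atTop, (P ^ n).mulVec (fun _ => (1:ℝ)) s < 1/2 := by
    intro s
    have := (tendsto_pi_nhds.1 hproper s)
    exact this.eventually_lt_const (by norm_num)
  have h2 : ∀ᶠ n in atTop, ∀ s : S, (P ^ n).mulVec (fun _ => (1:ℝ)) s < 1/2 :=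
    eventually_all.2 h
  obtain ⟨N, hN⟩ := h2.exists
  exact ⟨N, fun s => (hN s).le⟩

lemma geom_decay (hP0 : ∀ s s', 0 ≤ P s s') (hProw : ∀ s, ∑ s', P s s' ≤ 1)
    {N : ℕ} (hN : ∀ s : S, (P ^ N).mulVec (fun _ => (1:ℝ)) s ≤ 1/2) :
    ∀ (q : ℕ) (s : S), (P ^ (N * q)).mulVec (fun _ => (1:ℝ)) s ≤ (1/2) ^ q := by
  intro q
  induction q with
  | zero => intro s; simp
  | succ q ih =>
    intro s
    have : (P ^ (N * (q + 1))) = P ^ (N * q) * P ^ N := by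
      rw [← pow_add]; ring_nf
    rw [this, ← Matrix.mulVec_mulVec]
    calc (P ^ (N * q)).mulVec ((P ^ N).mulVec fun _ => (1:ℝ)) s
        ≤ (P ^ (N * q)).mulVec (fun _ => (1/2 : ℝ)) s := by
          simp only [Matrix.mulVec, dotProduct]
          exact Finset.sum_le_sum fun t _ =>
            mul_le_mul_of_nonneg_left (hN t) (pow_entry_nonneg P hP0 _ s t)
      _ = (1/2) * (P ^ (N * q)).mulVec (fun _ => (1:ℝ)) s := by
          simp only [Matrix.mulVec, dotProduct, Finset.mul_sum]; congr 1; ext t; ring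
      _ ≤ (1/2) * (1/2) ^ q := by
          have := ih s; linarith
      _ = (1/2) ^ (q + 1) := by ring

lemma term_bound (hP0 : ∀ s s', 0 ≤ P s s') (hProw : ∀ s, ∑ s', P s s' ≤ 1)
    (hc : ∀ s, 0 < c s ∧ c s ≤ 1)
    {N : ℕ} (hN : ∀ s : S, (P ^ N).mulVec (fun _ => (1:ℝ)) s ≤ 1/2) :
    ∀ (n : ℕ) (s : S), (P ^ n).mulVec c s ≤ (1/2) ^ (n / N) := by
  intro n s
  have hsplit : P ^ n = P ^ (n % N) * P ^ (N * (n / N)) := by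
    rw [← pow_add]
    congr 1
    exact (Nat.mod_add_div n N).symm
  rw [hsplit, ← Matrix.mulVec_mulVec]
  have hc1 : ∀ t, (P ^ (N * (n / N))).mulVec c t ≤ (1/2) ^ (n / N) := by
    intro t
    calc (P ^ (N * (n / N))).mulVec c t
        ≤ (P ^ (N * (n / N))).mulVec (fun _ => (1:ℝ)) t := by
          simp only [Matrix.mulVec, dotProduct]
          exact Finset.sum_le_sum fun u _ =>
            mul_le_mul_of_nonneg_left (hc u).2 (pow_entry_nonneg P hP0 _ t u)
      _ ≤ (1/2) ^ (n / N) := geom_decay P hP0 hProw hN _ t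
  calc (P ^ (n % N)).mulVec ((P ^ (N * (n / N))).mulVec c) s
      ≤ (P ^ (n % N)).mulVec (fun _ => ((1:ℝ)/2) ^ (n / N)) s := by
        simp only [Matrix.mulVec, dotProduct]
        exact Finset.sum_le_sum fun t _ =>
          mul_le_mul_of_nonneg_left (hc1 t) (pow_entry_nonneg P hP0 _ s t)
    _ = (1/2) ^ (n / N) * (P ^ (n % N)).mulVec (fun _ => (1:ℝ)) s := by
        simp only [Matrix.mulVec, dotProduct, Finset.mul_sum]; congr 1; ext t; ring
    _ ≤ (1/2) ^ (n / N) * 1 := by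
        exact mul_le_mul_of_nonneg_left (pow_mulVec_one_le P hP0 hProw _ s) (by positivity)
    _ = (1/2) ^ (n / N) := mul_one _


lemma term_nonneg (hP0 : ∀ s s', 0 ≤ P s s') (hc : ∀ s, 0 < c s ∧ c s ≤ 1) :
    ∀ (n : ℕ) (s : S), 0 ≤ (P ^ n).mulVec c s := by
  intro n s
  simp only [Matrix.mulVec, dotProduct]
  exact Finset.sum_nonneg fun t _ =>
    mul_nonneg (pow_entry_nonneg P hP0 n s t) (hc t).1.le

lemma ssp_summable (hP0 : ∀ s s', 0 ≤ P s s') (hProw : ∀ s, ∑ s', P s s' ≤ 1)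
    (hc : ∀ s, 0 < c s ∧ c s ≤ 1) (hproper : sspProper P) (s : S) :
    Summable (fun n : ℕ => (P ^ n).mulVec c s) := by
  obtain ⟨N, hN⟩ := exists_half P hproper
  have hN1 : 1 ≤ N := by
    by_contra h
    have hN0 : N = 0 := by omega
    have := hN s
    rw [hN0] at this
    simp at this
    norm_num at this
  apply summable_of_sum_range_le (c := 2 * N) (fun n => term_nonneg P c hP0 hc n s)
  intro M
  calc ∑ n ∈ Finset.range M, (P ^ n).mulVec c s
      ≤ ∑ n ∈ Finset.range M, ((1:ℝ)/2) ^ (n / N) :=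
        Finset.sum_le_sum fun n _ => term_bound P c hP0 hProw hc hN n s
    _ ≤ ∑ n ∈ Finset.range (N * M), ((1:ℝ)/2) ^ (n / N) := by
        apply Finset.sum_le_sum_of_subset_of_nonneg
        · exact Finset.range_subset_range.2 (Nat.le_mul_of_pos_left M hN1)
        · intro i _ _; positivity
    _ = N * ∑ q ∈ Finset.range M, ((1:ℝ)/2) ^ q := geomdiv_sum N M
    _ ≤ N * 2 := by
        apply mul_le_mul_of_nonneg_left _ (by positivity)
        simpa using sum_geometric_two_le M
    _ = 2 * N := by ring

lemma W_le_d {d : ℝ} (hP0 : ∀ s s', 0 ≤ P s s') (hProw : ∀ s, ∑ s', P s s' ≤ 1)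
    (hc : ∀ s, 0 < c s ∧ c s ≤ 1) (hproper : sspProper P)
    (hval : ∀ s, sspVal P c s ≤ d) :
    ∀ (n : ℕ) (s : S), ∑ k ∈ Finset.range n, (P ^ k).mulVec c s ≤ d := by
  intro n s
  calc ∑ k ∈ Finset.range n, (P ^ k).mulVec c s
      ≤ ∑' k : ℕ, (P ^ k).mulVec c s := by
        apply Summable.sum_le_tsum _ (fun i _ => term_nonneg P c hP0 hc i s)
        exact ssp_summable P c hP0 hProw hc hproper s
    _ ≤ d := hval s


lemma c_le_d {d : ℝ} (hP0 : ∀ s s', 0 ≤ P s s') (hProw : ∀ s, ∑ s', P s s' ≤ 1)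
    (hc : ∀ s, 0 < c s ∧ c s ≤ 1) (hproper : sspProper P)
    (hval : ∀ s, sspVal P c s ≤ d) : ∀ s : S, c s ≤ d := by
  intro s
  have h0 : (P ^ 0).mulVec c s = c s := by simp
  calc c s = ∑ k ∈ Finset.range 1, (P ^ k).mulVec c s := by simp [h0]
    _ ≤ d := W_le_d P c hP0 hProw hc hproper hval 1 s

lemma exceed_nonneg (hP0 : ∀ s s', 0 ≤ P s s') (hProw : ∀ s, ∑ s', P s s' ≤ 1) :
    ∀ (n : ℕ) (m : ℝ) (s : S), 0 ≤ exceedProb P c n m s := by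
  intro n
  induction n with
  | zero => intro m s; simp only [exceedProb]; positivity
  | succ n ih =>
    intro m s
    simp only [exceedProb]
    have h1 : (0:ℝ) ≤ (1 - ∑ s', P s s') * (if m < c s then 1 else 0) := by
      apply mul_nonneg (by linarith [hProw s]); positivity
    have h2 : (0:ℝ) ≤ ∑ s', P s s' * exceedProb P c n (m - c s) s' :=
      Finset.sum_nonneg fun s' _ => mul_nonneg (hP0 s s') (ih _ s')
    linarith

lemma exceed_le_one (hP0 : ∀ s s', 0 ≤ P s s') (hProw : ∀ s, ∑ s', P s s' ≤ 1) :
    ∀ (n : ℕ) (m : ℝ) (s : S), exceedProb P c n m s ≤ 1 := by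
  intro n
  induction n with
  | zero => intro m s; simp only [exceedProb]; split <;> norm_num
  | succ n ih =>
    intro m s
    simp only [exceedProb]
    have h1 : (1 - ∑ s', P s s') * (if m < c s then 1 else 0) ≤ 1 - ∑ s', P s s' := by
      split <;> simp <;> linarith [hProw s, Finset.sum_nonneg fun s' (_ : s' ∈ Finset.univ) => hP0 s s']
    have h2 : ∑ s', P s s' * exceedProb P c n (m - c s) s' ≤ ∑ s', P s s' :=
      Finset.sum_le_sum fun s' _ => by
        calc P s s' * exceedProb P c n (m - c s) s' ≤ P s s' * 1 :=
              mul_le_mul_of_nonneg_left (ih _ s') (hP0 s s')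
          _ = P s s' := mul_one _
    linarith

lemma exceed_of_neg (hcpos : ∀ s, 0 < c s) :
    ∀ (n : ℕ) (m : ℝ), m < 0 → ∀ (s : S), exceedProb P c n m s = 1 := by
  intro n
  induction n with
  | zero => intro m hm s; simp only [exceedProb]; rw [if_pos hm]
  | succ n ih =>
    intro m hm s
    simp only [exceedProb]
    rw [if_pos (lt_of_lt_of_le hm (hcpos s).le)]
    have : ∀ s', P s s' * exceedProb P c n (m - c s) s' = P s s' := fun s' => by
      rw [ih _ (by linarith [hcpos s]) s', mul_one]
    rw [Finset.sum_congr rfl fun s' _ => this s']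
    ring

lemma exceed_anti (hP0 : ∀ s s', 0 ≤ P s s') (hProw : ∀ s, ∑ s', P s s' ≤ 1) :
    ∀ (n : ℕ) (m m' : ℝ), m ≤ m' → ∀ (s : S),
      exceedProb P c n m' s ≤ exceedProb P c n m s := by
  intro n
  induction n with
  | zero =>
    intro m m' hmm s
    simp only [exceedProb]
    split
    · rw [if_pos (by linarith)]
    · split <;> norm_num
  | succ n ih =>
    intro m m' hmm s
    simp only [exceedProb]
    have h1 : (1 - ∑ s', P s s') * (if m' < c s then 1 else 0)
        ≤ (1 - ∑ s', P s s') * (if m < c s then 1 else 0) := by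
      apply mul_le_mul_of_nonneg_left _ (by linarith [hProw s])
      split
      · rw [if_pos (by linarith)]
      · split <;> norm_num
    have h2 : ∑ s', P s s' * exceedProb P c n (m' - c s) s'
        ≤ ∑ s', P s s' * exceedProb P c n (m - c s) s' :=
      Finset.sum_le_sum fun s' _ =>
        mul_le_mul_of_nonneg_left (ih _ _ (by linarith) s') (hP0 s s')
    linarith

section
variable (hP0 : ∀ s s', 0 ≤ P s s') (hProw : ∀ s, ∑ s', P s s' ≤ 1)
    (hc : ∀ s, 0 < c s ∧ c s ≤ 1)

include hP0 hProw hc in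
/-- Markov's inequality for the truncated exceedance probability. -/
lemma markov_aux :
    ∀ (n : ℕ) (m : ℝ), 0 ≤ m → ∀ (s : S),
      m * exceedProb P c n m s ≤ ∑ k ∈ Finset.range n, (P ^ k).mulVec c s := by
  intro n
  induction n with
  | zero => intro m hm s; simp only [exceedProb]; rw [if_neg (not_lt.2 hm)]; simp
  | succ n ih =>
    intro m hm s
    have hW : ∑ k ∈ Finset.range (n+1), (P ^ k).mulVec c s
        = c s + ∑ s', P s s' * (∑ k ∈ Finset.range n, (P ^ k).mulVec c s') := by
      rw [Finset.sum_range_succ']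
      simp only [pow_zero, Matrix.one_mulVec]
      have : ∀ k, (P ^ (k+1)).mulVec c s = ∑ s', P s s' * (P ^ k).mulVec c s' := by
        intro k
        rw [pow_succ', ← Matrix.mulVec_mulVec]
        simp [Matrix.mulVec, dotProduct]
      rw [Finset.sum_congr rfl fun k _ => this k, ← Finset.sum_comm]
      rw [add_comm]
      congr 1
      exact Finset.sum_congr rfl fun s' _ => by rw [Finset.mul_sum]
    rw [hW]
    simp only [exceedProb]
    rcases lt_or_ge m (c s) with hcase | hcase
    · -- m < c s
      rw [if_pos hcase]
      have hsum : ∑ s', P s s' * exceedProb P c n (m - c s) s' ≤ ∑ s', P s s' :=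
        Finset.sum_le_sum fun s' _ => by
          calc P s s' * exceedProb P c n (m - c s) s' ≤ P s s' * 1 :=
            mul_le_mul_of_nonneg_left (exceed_le_one P c hP0 hProw n _ s') (hP0 s s')
          _ = P s s' := mul_one _
      have hsum0 : 0 ≤ ∑ s', P s s' * exceedProb P c n (m - c s) s' :=
        Finset.sum_nonneg fun s' _ =>
          mul_nonneg (hP0 s s') (exceed_nonneg P c hP0 hProw n _ s')
      have hWsum : 0 ≤ ∑ s', P s s' * (∑ k ∈ Finset.range n, (P ^ k).mulVec c s') :=
        Finset.sum_nonneg fun s' _ => mul_nonneg (hP0 s s')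
          (Finset.sum_nonneg fun k _ => term_nonneg P c hP0 hc k s')
      have : m * ((1 - ∑ s', P s s') * 1 + ∑ s', P s s' * exceedProb P c n (m - c s) s')
          ≤ m * 1 := by
        apply mul_le_mul_of_nonneg_left _ hm
        nlinarith [hProw s]
      calc m * ((1 - ∑ s', P s s') * 1 + ∑ s', P s s' * exceedProb P c n (m - c s) s')
          ≤ m * 1 := this
        _ = m := mul_one m
        _ ≤ c s := hcase.le
        _ ≤ c s + ∑ s', P s s' * (∑ k ∈ Finset.range n, (P ^ k).mulVec c s') := by linarith
    · -- c s ≤ m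
      rw [if_neg (not_lt.2 hcase), mul_zero, zero_add, Finset.mul_sum]
      have key : ∀ s', m * (P s s' * exceedProb P c n (m - c s) s')
          ≤ P s s' * (∑ k ∈ Finset.range n, (P ^ k).mulVec c s' + c s) := by
        intro s'
        have hE0 := exceed_nonneg P c hP0 hProw n (m - c s) s'
        have hE1 := exceed_le_one P c hP0 hProw n (m - c s) s'
        have hih := ih (m - c s) (by linarith) s'
        have : m * exceedProb P c n (m - c s) s'
            ≤ ∑ k ∈ Finset.range n, (P ^ k).mulVec c s' + c s := by
          have expand : m * exceedProb P c n (m - c s) s'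
              = (m - c s) * exceedProb P c n (m - c s) s'
                + c s * exceedProb P c n (m - c s) s' := by ring
          rw [expand]
          have h2 : c s * exceedProb P c n (m - c s) s' ≤ c s * 1 :=
            mul_le_mul_of_nonneg_left hE1 (hc s).1.le
          linarith
        calc m * (P s s' * exceedProb P c n (m - c s) s')
            = P s s' * (m * exceedProb P c n (m - c s) s') := by ring
          _ ≤ P s s' * (∑ k ∈ Finset.range n, (P ^ k).mulVec c s' + c s) :=
            mul_le_mul_of_nonneg_left this (hP0 s s')
      calc ∑ s', m * (P s s' * exceedProb P c n (m - c s) s')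
          ≤ ∑ s', P s s' * (∑ k ∈ Finset.range n, (P ^ k).mulVec c s' + c s) :=
            Finset.sum_le_sum fun s' _ => key s'
        _ = (∑ s', P s s' * (∑ k ∈ Finset.range n, (P ^ k).mulVec c s'))
            + (∑ s', P s s') * c s := by
            simp only [mul_add, Finset.sum_add_distrib, Finset.sum_mul]
        _ ≤ c s + ∑ s', P s s' * (∑ k ∈ Finset.range n, (P ^ k).mulVec c s') := by
            have : (∑ s', P s s') * c s ≤ 1 * c s :=
              mul_le_mul_of_nonneg_right (hProw s) (hc s).1.le
            linarith

include hP0 hProw hc in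
/-- Chaining lemma. -/
lemma chain_aux {d : ℝ} (hcd : ∀ s : S, c s ≤ d) {b Q : ℝ} (hb : 0 ≤ b) (hQ0 : 0 ≤ Q)
    (hQ : ∀ (n : ℕ) (s : S), exceedProb P c n b s ≤ Q) :
    ∀ (n : ℕ) (a : ℝ), 0 ≤ a → ∀ s : S,
      exceedProb P c n (a + d + b) s ≤ Q * exceedProb P c n a s := by
  rcases isEmpty_or_nonempty S with hS | hS
  · intro n a ha s; exact isEmptyElim s
  have hd0 : 0 ≤ d := le_trans (hc (Classical.arbitrary S)).1.le (hcd _)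
  intro n
  induction n with
  | zero =>
    intro a ha s
    simp only [exceedProb]
    rw [if_neg (by push_neg; positivity)]
    have := exceed_nonneg P c hP0 hProw 0 a s
    positivity
  | succ n ih =>
    intro a ha s
    simp only [exceedProb]
    have hind : (if a + d + b < c s then (1:ℝ) else 0) = 0 := by
      rw [if_neg]
      push_neg
      calc c s ≤ d := hcd s
        _ ≤ a + d + b := by linarith
    rw [hind, mul_zero, zero_add]
    rcases lt_or_ge a (c s) with hcase | hcase
    · -- crossing: a < c s
      rw [if_pos hcase]
      have hterm : ∀ s', P s s' * exceedProb P c n (a + d + b - c s) s' ≤ P s s' * Q := by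
        intro s'
        apply mul_le_mul_of_nonneg_left _ (hP0 s s')
        calc exceedProb P c n (a + d + b - c s) s'
            ≤ exceedProb P c n b s' := by
              apply exceed_anti P c hP0 hProw n b _ _ s'
              have := hcd s
              linarith
          _ ≤ Q := hQ n s'
      have hones : ∀ s', exceedProb P c n (a - c s) s' = 1 := fun s' =>
        exceed_of_neg P c (fun t => (hc t).1) n _ (by linarith) s'
      calc ∑ s', P s s' * exceedProb P c n (a + d + b - c s) s'
          ≤ ∑ s', P s s' * Q := Finset.sum_le_sum fun s' _ => hterm s'
        _ = Q * ∑ s', P s s' := by rw [← Finset.sum_mul]; ring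
        _ ≤ Q * ((1 - ∑ s', P s s') * 1 + ∑ s', P s s' * exceedProb P c n (a - c s) s') := by
            apply mul_le_mul_of_nonneg_left _ hQ0
            have : ∑ s', P s s' * exceedProb P c n (a - c s) s' = ∑ s', P s s' := by
              exact Finset.sum_congr rfl fun s' _ => by rw [hones s', mul_one]
            rw [this]
            linarith [hProw s]
    · -- no crossing yet: c s ≤ a
      rw [if_neg (not_lt.2 hcase), mul_zero, zero_add, Finset.mul_sum]
      apply Finset.sum_le_sum
      intro s' _
      have : exceedProb P c n (a + d + b - c s) s' ≤ Q * exceedProb P c n (a - c s) s' := by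
        have := ih (a - c s) (by linarith) s'
        calc exceedProb P c n (a + d + b - c s) s'
            = exceedProb P c n ((a - c s) + d + b) s' := by ring_nf
          _ ≤ Q * exceedProb P c n (a - c s) s' := this
      calc P s s' * exceedProb P c n (a + d + b - c s) s'
          ≤ P s s' * (Q * exceedProb P c n (a - c s) s') :=
            mul_le_mul_of_nonneg_left this (hP0 s s')
        _ = Q * (P s s' * exceedProb P c n (a - c s) s') := by ring
end

lemma markov_div {d : ℝ} (hP0 : ∀ s s', 0 ≤ P s s') (hProw : ∀ s, ∑ s', P s s' ≤ 1)
    (hc : ∀ s, 0 < c s ∧ c s ≤ 1)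
    (hW : ∀ (n : ℕ) (s : S), ∑ k ∈ Finset.range n, (P ^ k).mulVec c s ≤ d) :
    ∀ (n : ℕ) (m : ℝ), 0 < m → ∀ (s : S), exceedProb P c n m s ≤ d / m := by
  intro n m hm s
  rw [le_div_iff₀ hm]
  calc exceedProb P c n m s * m = m * exceedProb P c n m s := mul_comm _ _
    _ ≤ ∑ k ∈ Finset.range n, (P ^ k).mulVec c s :=
        markov_aux P c hP0 hProw hc n m hm.le s
    _ ≤ d := hW n s

section
variable {d : ℝ} (hP0 : ∀ s s', 0 ≤ P s s') (hProw : ∀ s, ∑ s', P s s' ≤ 1)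
    (hc : ∀ s, 0 < c s ∧ c s ≤ 1) (hd : 0 < d)
    (hW : ∀ (n : ℕ) (s : S), ∑ k ∈ Finset.range n, (P ^ k).mulVec c s ≤ d)
    (hcd : ∀ s : S, c s ≤ d)

include hP0 hProw hc hd hW hcd in
lemma iter_aux : ∀ (k : ℕ) (a : ℝ), 0 ≤ a → ∀ (n : ℕ) (s : S),
    exceedProb P c n (a + 4*d*k) s ≤ (1/3)^k * exceedProb P c n a s := by
  have hQ : ∀ (n : ℕ) (s : S), exceedProb P c n (3*d) s ≤ 1/3 := by
    intro n s
    calc exceedProb P c n (3*d) s ≤ d / (3*d) :=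
          markov_div P c hP0 hProw hc hW n (3*d) (by linarith) s
      _ = 1/3 := by field_simp
  intro k
  induction k with
  | zero => intro a ha n s; simp
  | succ k ih =>
    intro a ha n s
    have harg : a + 4*d*(k+1 : ℕ) = (a + 4*d*k) + d + 3*d := by push_cast; ring
    rw [harg]
    calc exceedProb P c n ((a + 4*d*k) + d + 3*d) s
        ≤ (1/3) * exceedProb P c n (a + 4*d*k) s :=
          chain_aux P c hP0 hProw hc hcd (by linarith) (by norm_num) hQ n _
            (by positivity) s
      _ ≤ (1/3) * ((1/3)^k * exceedProb P c n a s) := by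
          have := ih a ha n s
          linarith
      _ = (1/3)^(k+1) * exceedProb P c n a s := by ring

include hP0 hProw hc hd hW hcd in
theorem final_bound : ∀ (m : ℝ), 0 ≤ m → ∀ (n : ℕ) (s : S),
    exceedProb P c n m s ≤ 2 * Real.exp (-m / (4 * d)) := by
  intro m hm n s
  have hexp_rw : -m / (4*d) = -(m/(4*d)) := by ring
  rcases le_or_gt m (2*d) with h1 | h1
  · -- Region A
    calc exceedProb P c n m s ≤ 1 := exceed_le_one P c hP0 hProw n m s
      _ ≤ 2 * Real.exp (-m / (4*d)) := by
        rw [hexp_rw]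
        have hfrac : m/(4*d) ≤ 1/2 := by
          rw [div_le_iff₀ (by linarith)]; linarith
        have harg : -(1/2 : ℝ) ≤ -(m/(4*d)) := by linarith
        have hmono := Real.exp_le_exp.2 harg
        have hneg : Real.exp (-(1/2 : ℝ)) = 1 / Real.exp (1/2) := by
          rw [Real.exp_neg]; ring
        have hpos := Real.exp_pos (1/2 : ℝ)
        have h2 := exphalf_le
        rw [hneg] at hmono
        have : 1/2 ≤ Real.exp (-(m/(4*d))) := by
          calc (1/2 : ℝ) ≤ 1 / Real.exp (1/2) := by
                rw [div_le_div_iff₀ (by norm_num) hpos]; linarith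
            _ ≤ Real.exp (-(m/(4*d))) := hmono
        linarith
  · rcases le_or_gt m (12*d) with h2 | h2
    · -- Region B
      have hy2 : 2 ≤ m/d := by rw [le_div_iff₀ hd]; linarith
      have hy12 : m/d ≤ 12 := by rw [div_le_iff₀ hd]; linarith
      have hB := regionB hy2 hy12
      have hm0 : 0 < m := by linarith
      calc exceedProb P c n m s ≤ d / m := markov_div P c hP0 hProw hc hW n m hm0 s
        _ ≤ 2 * Real.exp (-m / (4*d)) := by
          rw [hexp_rw]
          have hq : m/(4*d) = (m/d)/4 := by ring
          rw [hq, Real.exp_neg]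
          have hEpos := Real.exp_pos ((m/d)/4)
          have hfe : d*(2*(m/d)) = 2*m := by field_simp
          have key : d * Real.exp ((m/d)/4) ≤ 2 * m := by
            nlinarith [mul_le_mul_of_nonneg_left hB hd.le]
          rw [div_le_iff₀ hm0]
          calc d = (d * Real.exp ((m/d)/4)) * (Real.exp ((m/d)/4))⁻¹ := by
                field_simp
            _ ≤ (2*m) * (Real.exp ((m/d)/4))⁻¹ :=
                mul_le_mul_of_nonneg_right key (by positivity)
            _ = 2 * (Real.exp ((m/d)/4))⁻¹ * m := by ring
    · -- Region C
      set t : ℝ := m/(4*d) with htdef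
      have ht3 : 3 ≤ t := by rw [htdef, le_div_iff₀ (by linarith)]; linarith
      have ht0 : 0 ≤ t := by linarith
      set K : ℕ := ⌊t⌋₊ with hKdef
      have hK3 : 3 ≤ K := Nat.le_floor (by exact_mod_cast ht3)
      set k : ℕ := K - 1 with hkdef
      have hkcast : (k:ℝ) = (K:ℝ) - 1 := by
        rw [hkdef, Nat.cast_sub (by omega)]; norm_num
      have hKle : (K:ℝ) ≤ t := Nat.floor_le ht0
      have hKgt : t < K + 1 := Nat.lt_floor_add_one t
      have h4dt : 4*d*t = m := by rw [htdef]; field_simp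
      set a : ℝ := m - 4*d*k with hadef
      have ha4 : 4*d ≤ a := by
        rw [hadef, hkcast]
        nlinarith
      have ha0 : 0 < a := by linarith
      have hmeq : m = a + 4*d*k := by rw [hadef]; ring
      have hk_ge : t - 2 ≤ (k:ℝ) := by rw [hkcast]; linarith
      calc exceedProb P c n m s
          = exceedProb P c n (a + 4*d*k) s := by rw [← hmeq]
        _ ≤ (1/3)^k * exceedProb P c n a s :=
            iter_aux P c hP0 hProw hc hd hW hcd k a ha0.le n s
        _ ≤ (1/3)^k * (d/a) := by
            apply mul_le_mul_of_nonneg_left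
              (markov_div P c hP0 hProw hc hW n a ha0 s) (by positivity)
        _ ≤ (1/3)^k * (1/4) := by
            apply mul_le_mul_of_nonneg_left _ (by positivity)
            rw [div_le_div_iff₀ ha0 (by norm_num)]
            linarith
        _ ≤ (1/3:ℝ)^(t-2) * (1/4) := by
            apply mul_le_mul_of_nonneg_right _ (by norm_num)
            rw [← Real.rpow_natCast (1/3:ℝ) k]
            exact Real.rpow_le_rpow_of_exponent_ge (by norm_num) (by norm_num) hk_ge
        _ = (9/4) * (1/3:ℝ)^t := by
            rw [Real.rpow_sub (by norm_num : (0:ℝ) < 1/3)]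
            have : (1/3:ℝ)^(2:ℝ) = 1/9 := by
              rw [show ((2:ℝ)) = ((2:ℕ):ℝ) by norm_num, Real.rpow_natCast]
              norm_num
            rw [this]
            ring
        _ ≤ 2 * Real.exp (-t) := regionC ht3
        _ = 2 * Real.exp (-m / (4*d)) := by rw [hexp_rw]
end

end SSPAux

/-- if `π` is proper with value function bounded by `d` on every
non-goal state, then for all `m ≥ 0` the probability that the cumulative cost of `π`
until reaching the goal exceeds `m`, started from any state, is at most
`2 exp(-m/(4d))`. -/
theorem stmt_9 {S : Type*} [Fintype S] [DecidableEq S]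
    (P : Matrix S S ℝ) (c : S → ℝ) (d : ℝ)
    (hP0 : ∀ s s', 0 ≤ P s s') (hProw : ∀ s, ∑ s', P s s' ≤ 1)
    (hc : ∀ s, 0 < c s ∧ c s ≤ 1) (hd : 0 < d)
    (hproper : sspProper P)
    (hval : ∀ s, sspVal P c s ≤ d) :
    ∀ (m : ℝ), 0 ≤ m → ∀ (n : ℕ) (s : S),
      exceedProb P c n m s ≤ 2 * Real.exp (-m / (4 * d)) := by
  have hW := SSPAux.W_le_d P c hP0 hProw hc hproper hval
  have hcd := SSPAux.c_le_d P c hP0 hProw hc hproper hval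
  exact SSPAux.final_bound P c hP0 hProw hc hd hW hcd
end

section
/- In the star-shaped MDP where s0 transitions uniformly at random to one of n ≥ 2 first-layer states and all subsequent transitions are deterministic chains of length 2 converging to a common final state y, the final state y is L-controllable for L = 3 (there is a policy whose expected hitting time from s0 to y is 3), while no first-layer or second-layer state s on the chains is L-controllable for L < n (since any policy's expected hitting time from s0 to a particular branch state is at least n). -/
open Matrix
open scoped ENNReal

/-- States of the star-shaped MDP: `none` is the initial state `s0`,
`some (Sum.inl (i, l))` is the `l`-th state (out of 2) on branch `i` (out of `n`),
and `some (Sum.inr ())` is the common final state `y`. -/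
abbrev StarState (n : ℕ) := Option ((Fin n × Fin 2) ⊕ Unit)

/-- Transition kernel of the star-shaped MDP under a policy `π` (in each state the
policy chooses whether to `RESET`, encoded by `π s = true`, or to advance): from
`s0` advancing moves uniformly at random to the first state of one of the `n`
branches, each branch is a deterministic chain of length 2 converging to the common
final state `y`, which is absorbing under advancing, and `RESET` moves to `s0`. -/
noncomputable def starStep (n : ℕ) (π : StarState n → Bool) (s s' : StarState n) : ℝ≥0∞ :=
  if π s then (if s' = none then 1 else 0)
  else
    match s, s' with
    | none, some (Sum.inl (_, l)) => if l = 0 then ((n : ℝ≥0∞))⁻¹ else 0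
    | none, _ => 0
    | some (Sum.inl (i, l)), t =>
        if l = 0 then (if t = some (Sum.inl (i, 1)) then 1 else 0)
        else (if t = some (Sum.inr ()) then 1 else 0)
    | some (Sum.inr _), t => if t = some (Sum.inr ()) then 1 else 0

/-- Expected hitting time of `target` from `s0` under policy `π`, computed as
`E[τ] = Σ_m P(τ > m)` where `P(τ > m)` is the total mass of `m`-step paths from
`s0` avoiding `target`. -/
noncomputable def starHit (n : ℕ) (π : StarState n → Bool) (target : StarState n) : ℝ≥0∞ :=
  ∑' m : ℕ,
    (((Matrix.of fun s s' : StarState n =>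
            if s' = target then 0 else starStep n π s s') ^ m).mulVec
        fun _ => (1 : ℝ≥0∞)) none

/-- The sub-stochastic matrix with the target column zeroed out. -/
noncomputable def starQ (n : ℕ) (π : StarState n → Bool) (t : StarState n) :
    Matrix (StarState n) (StarState n) ℝ≥0∞ :=
  Matrix.of fun s s' => if s' = t then 0 else starStep n π s s'

lemma starHit_eq (n : ℕ) (π : StarState n → Bool) (t : StarState n) :
    starHit n π t = ∑' m : ℕ, ((starQ n π t ^ m).mulVec fun _ => (1 : ℝ≥0∞)) none := rfl

lemma starQ_pow_succ (n : ℕ) (π : StarState n → Bool) (t : StarState n) (m : ℕ)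
    (v : StarState n → ℝ≥0∞) :
    (starQ n π t ^ (m + 1)).mulVec v = (starQ n π t).mulVec ((starQ n π t ^ m).mulVec v) := by
  rw [pow_succ', Matrix.mulVec_mulVec]

/-- Row sums for an indicator row: if the row of `Q` at `s` is the indicator of `a ≠ t`
scaled by `q`, then `(Q.mulVec v) s = q * v a`. -/
lemma sum_indicator_row {n : ℕ} (v : StarState n → ℝ≥0∞) (a t : StarState n) (q : ℝ≥0∞)
    (h : a ≠ t) :
    (∑ s' : StarState n, (if s' = t then 0 else if s' = a then q else 0) * v s') = q * v a := by
  rw [Finset.sum_eq_single a]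
  · rw [if_neg h, if_pos rfl]
  · intro b _ hb
    by_cases hbt : b = t
    · simp [hbt]
    · simp [hbt, hb]
  · simp

/-- `mulVec` of `starQ` from the initial state. -/
lemma starQ_mulVec_none {n : ℕ} {π : StarState n → Bool} {t : StarState n}
    (hπ : π none = false) (v : StarState n → ℝ≥0∞) :
    ((starQ n π t).mulVec v) none =
      ∑ j : Fin n, (if some (Sum.inl (j, (0 : Fin 2))) = t then 0 else (n : ℝ≥0∞)⁻¹) *
        v (some (Sum.inl (j, 0))) := by
  show ∑ s' : StarState n, starQ n π t none s' * v s' = _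
  rw [Fintype.sum_option, Fintype.sum_sum_type, Fintype.sum_prod_type]
  have h1 : starQ n π t none none = 0 := by
    simp only [starQ, Matrix.of_apply]
    split
    · rfl
    · simp [starStep, hπ]
  have h2 : ∀ u : Unit, starQ n π t none (some (Sum.inr u)) = 0 := by
    intro u
    simp only [starQ, Matrix.of_apply]
    split
    · rfl
    · simp [starStep, hπ]
  have h3 : ∀ (j : Fin n) (k : Fin 2), starQ n π t none (some (Sum.inl (j, k))) =
      if some (Sum.inl (j, k)) = t then 0 else if k = 0 then (n : ℝ≥0∞)⁻¹ else 0 := by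
    intro j k
    simp only [starQ, Matrix.of_apply]
    split
    · simp_all
    · simp_all [starStep, hπ]
  simp only [h1, h2, h3, zero_mul, zero_add, add_zero, Finset.sum_const, smul_zero]
  refine Finset.sum_congr rfl fun j _ => ?_
  rw [Fin.sum_univ_two]
  by_cases h : some (Sum.inl (j, (1 : Fin 2))) = t
  · simp [h]
  · simp [h]

/-- `mulVec` of `starQ` from a first-layer branch state (advance). -/
lemma starQ_mulVec_l0 {n : ℕ} {π : StarState n → Bool} {t : StarState n} (j : Fin n)
    (hπ : π (some (Sum.inl (j, 0))) = false)
    (hne : some (Sum.inl (j, (1 : Fin 2))) ≠ t) (v : StarState n → ℝ≥0∞) :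
    ((starQ n π t).mulVec v) (some (Sum.inl (j, 0))) = v (some (Sum.inl (j, 1))) := by
  show ∑ s' : StarState n, starQ n π t (some (Sum.inl (j, 0))) s' * v s' = _
  have hrow : ∀ s' : StarState n, starQ n π t (some (Sum.inl (j, 0))) s' =
      if s' = t then 0 else if s' = some (Sum.inl (j, 1)) then 1 else 0 := by
    intro s'
    simp only [starQ, Matrix.of_apply]
    split
    · rfl
    · simp [starStep, hπ]
  simp only [hrow]
  rw [sum_indicator_row v _ t 1 hne, one_mul]

/-- `mulVec` of `starQ` from a second-layer branch state (advance). -/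
lemma starQ_mulVec_l1 {n : ℕ} {π : StarState n → Bool} {t : StarState n} (j : Fin n)
    (hπ : π (some (Sum.inl (j, 1))) = false)
    (hne : (some (Sum.inr ()) : StarState n) ≠ t) (v : StarState n → ℝ≥0∞) :
    ((starQ n π t).mulVec v) (some (Sum.inl (j, 1))) = v (some (Sum.inr ())) := by
  show ∑ s' : StarState n, starQ n π t (some (Sum.inl (j, 1))) s' * v s' = _
  have hrow : ∀ s' : StarState n, starQ n π t (some (Sum.inl (j, 1))) s' =
      if s' = t then 0 else if s' = some (Sum.inr ()) then 1 else 0 := by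
    intro s'
    simp only [starQ, Matrix.of_apply]
    split
    · rfl
    · simp [starStep, hπ]
  simp only [hrow]
  rw [sum_indicator_row v _ t 1 hne, one_mul]

/-- `mulVec` of `starQ` from the final state (advance: absorbing). -/
lemma starQ_mulVec_y {n : ℕ} {π : StarState n → Bool} {t : StarState n}
    (hπ : π (some (Sum.inr ())) = false)
    (hne : (some (Sum.inr ()) : StarState n) ≠ t) (v : StarState n → ℝ≥0∞) :
    ((starQ n π t).mulVec v) (some (Sum.inr ())) = v (some (Sum.inr ())) := by
  show ∑ s' : StarState n, starQ n π t (some (Sum.inr ())) s' * v s' = _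
  have hrow : ∀ s' : StarState n, starQ n π t (some (Sum.inr ())) s' =
      if s' = t then 0 else if s' = some (Sum.inr ()) then 1 else 0 := by
    intro s'
    simp only [starQ, Matrix.of_apply]
    split
    · rfl
    · simp [starStep, hπ]
  simp only [hrow]
  rw [sum_indicator_row v _ t 1 hne, one_mul]

/-- `mulVec` of `starQ` from a resetting state. -/
lemma starQ_mulVec_reset {n : ℕ} {π : StarState n → Bool} {t : StarState n} (s : StarState n)
    (hπ : π s = true) (hne : (none : StarState n) ≠ t) (v : StarState n → ℝ≥0∞) :
    ((starQ n π t).mulVec v) s = v none := by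
  show ∑ s' : StarState n, starQ n π t s s' * v s' = _
  have hrow : ∀ s' : StarState n, starQ n π t s s' =
      if s' = t then 0 else if s' = none then 1 else 0 := by
    intro s'
    simp only [starQ, Matrix.of_apply]
    split
    · rfl
    · simp [starStep, hπ]
  simp only [hrow]
  rw [sum_indicator_row v _ t 1 hne, one_mul]

/-- in the star-shaped MDP with `n ≥ 2` branches, the final state `y`
is `L`-controllable for `L = 3`: some policy reaches it from `s0` in exactly `3`
expected steps; whereas no branch (first- or second-layer) state is `L`-controllable
for `L < n`: every policy has expected hitting time at least `n` to any branch
state. -/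
theorem stmt_19 (n : ℕ) (hn : 2 ≤ n) :
    (∃ π : StarState n → Bool, starHit n π (some (Sum.inr ())) = 3) ∧
      ∀ (π : StarState n → Bool) (i : Fin n) (l : Fin 2),
        (n : ℝ≥0∞) ≤ starHit n π (some (Sum.inl (i, l))) := by
  have hn0 : (n : ℝ≥0∞) ≠ 0 := by
    simp; omega
  have hntop : (n : ℝ≥0∞) ≠ ⊤ := ENNReal.natCast_ne_top n
  have hmulinv : (n : ℝ≥0∞) * (n : ℝ≥0∞)⁻¹ = 1 := ENNReal.mul_inv_cancel hn0 hntop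
  constructor
  · -- Part 1: policy that never resets reaches y in 3 expected steps.
    refine ⟨fun _ => false, ?_⟩
    set π : StarState n → Bool := fun _ => false with hπdef
    have hπ : ∀ s, π s = false := fun _ => rfl
    set f : ℕ → StarState n → ℝ≥0∞ :=
      fun m => (starQ n π (some (Sum.inr ())) ^ m).mulVec fun _ => 1 with hf
    have hrec : ∀ m, f (m + 1) = (starQ n π (some (Sum.inr ()))).mulVec (f m) := by
      intro m
      show (starQ n π (some (Sum.inr ())) ^ (m + 1)).mulVec _ = _
      rw [starQ_pow_succ]
    have hf0 : ∀ s, f 0 s = 1 := by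
      intro s; simp [hf, Matrix.one_mulVec]
    have hnoney : ∀ j : Fin n, ∀ k : Fin 2,
        (some (Sum.inl (j, k)) : StarState n) ≠ some (Sum.inr ()) := by
      intro j k; simp
    have e_none : ∀ (v : StarState n → ℝ≥0∞),
        ((starQ n π (some (Sum.inr ()))).mulVec v) none =
          ∑ j : Fin n, (n : ℝ≥0∞)⁻¹ * v (some (Sum.inl (j, 0))) := by
      intro v
      rw [starQ_mulVec_none (hπ none) v]
      refine Finset.sum_congr rfl fun j _ => ?_
      rw [if_neg (hnoney j 0)]
    have e_l1 : ∀ (v : StarState n → ℝ≥0∞) (j : Fin n),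
        ((starQ n π (some (Sum.inr ()))).mulVec v) (some (Sum.inl (j, 1))) = 0 := by
      intro v j
      show ∑ s' : StarState n,
        starQ n π (some (Sum.inr ())) (some (Sum.inl (j, 1))) s' * v s' = 0
      refine Finset.sum_eq_zero fun s' _ => ?_
      have : starQ n π (some (Sum.inr ())) (some (Sum.inl (j, 1))) s' = 0 := by
        simp only [starQ, Matrix.of_apply]
        by_cases h : s' = (some (Sum.inr ()) : StarState n) <;> simp [starStep, hπ, h]
      rw [this, zero_mul]
    have e_y : ∀ (v : StarState n → ℝ≥0∞),
        ((starQ n π (some (Sum.inr ()))).mulVec v) (some (Sum.inr ())) = 0 := by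
      intro v
      show ∑ s' : StarState n,
        starQ n π (some (Sum.inr ())) (some (Sum.inr ())) s' * v s' = 0
      refine Finset.sum_eq_zero fun s' _ => ?_
      have : starQ n π (some (Sum.inr ())) (some (Sum.inr ())) s' = 0 := by
        simp only [starQ, Matrix.of_apply]
        by_cases h : s' = (some (Sum.inr ()) : StarState n) <;> simp [starStep, hπ, h]
      rw [this, zero_mul]
    have h1n : f 1 none = 1 := by
      rw [hrec 0, e_none]
      simp only [hf0]
      rw [Finset.sum_const, Finset.card_univ, Fintype.card_fin, nsmul_eq_mul, mul_one, hmulinv]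
    have h10 : ∀ j, f 1 (some (Sum.inl (j, 0))) = 1 := by
      intro j; rw [hrec 0, starQ_mulVec_l0 j (hπ _) (hnoney j 1), hf0]
    have h11 : ∀ j, f 1 (some (Sum.inl (j, 1))) = 0 := by
      intro j; rw [hrec 0, e_l1]
    have h2n : f 2 none = 1 := by
      rw [hrec 1, e_none]
      simp only [h10]
      rw [Finset.sum_const, Finset.card_univ, Fintype.card_fin, nsmul_eq_mul, mul_one, hmulinv]
    have h20 : ∀ j, f 2 (some (Sum.inl (j, 0))) = 0 := by
      intro j; rw [hrec 1, starQ_mulVec_l0 j (hπ _) (hnoney j 1), h11]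
    have h21 : ∀ j, f 2 (some (Sum.inl (j, 1))) = 0 := by
      intro j; rw [hrec 1, e_l1]
    have hf3 : f 3 = 0 := by
      funext s
      match s with
      | none =>
          rw [hrec 2, e_none]
          simp only [h20, mul_zero]
          simp
      | some (Sum.inl (j, k)) =>
          match k with
          | 0 =>
              rw [hrec 2, starQ_mulVec_l0 j (hπ _) (hnoney j 1), h21]
              rfl
          | 1 =>
              rw [hrec 2, e_l1]
              rfl
      | some (Sum.inr ()) =>
          rw [hrec 2, e_y]
          rfl
    have hf3' : ∀ m, 3 ≤ m → f m none = 0 := by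
      intro m hm
      obtain ⟨k, rfl⟩ : ∃ k, m = k + 3 := ⟨m - 3, by omega⟩
      have : f (k + 3) = (starQ n π (some (Sum.inr ())) ^ k).mulVec (f 3) := by
        show (starQ n π (some (Sum.inr ())) ^ (k + 3)).mulVec _ = _
        rw [pow_add, ← Matrix.mulVec_mulVec]
      rw [this, hf3, Matrix.mulVec_zero]
      rfl
    rw [starHit_eq]
    rw [tsum_eq_sum (s := Finset.range 3) (by
      intro m hm
      exact hf3' m (by simp [Finset.mem_range] at hm; omega))]
    show f 0 none + (f 1 none + (f 2 none + 0)) = 3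
    rw [hf0, h1n, h2n]
    norm_num
  · -- Part 2: any branch state takes at least n expected steps.
    intro π i l
    set t : StarState n := some (Sum.inl (i, l)) with ht
    have hnonet : (none : StarState n) ≠ t := by simp [ht]
    have hyt : (some (Sum.inr ()) : StarState n) ≠ t := by simp [ht]
    set f : ℕ → StarState n → ℝ≥0∞ := fun m => (starQ n π t ^ m).mulVec fun _ => 1 with hf
    have hrec : ∀ m, f (m + 1) = (starQ n π t).mulVec (f m) := by
      intro m
      show (starQ n π t ^ (m + 1)).mulVec _ = _
      rw [starQ_pow_succ]
    set c : ℝ≥0∞ := 1 - (n : ℝ≥0∞)⁻¹ with hc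
    have hc1 : c ≤ 1 := tsub_le_self
    -- Good states: not the first state of branch i and not the target.
    have key : ∀ m (s : StarState n), s ≠ some (Sum.inl (i, 0)) → s ≠ t → c ^ m ≤ f m s := by
      intro m
      induction m with
      | zero => intro s _ _; simp [hf, Matrix.one_mulVec]
      | succ m ih =>
        intro s hs0 hst
        rw [hrec m]
        have hstep : c ^ (m + 1) ≤ c ^ m := by
          rw [pow_succ]
          calc c ^ m * c ≤ c ^ m * 1 := mul_le_mul_right hc1 _
          _ = c ^ m := mul_one _
        by_cases hπs : π s = true
        · rw [starQ_mulVec_reset s hπs hnonet]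
          exact le_trans hstep (ih none (by simp) hnonet)
        · have hπ' : π s = false := by simpa using hπs
          match s, hs0, hst, hπ' with
          | none, _, _, hπ' =>
            rw [starQ_mulVec_none hπ']
            have hsub : ∀ j ∈ Finset.univ.erase i,
                (n : ℝ≥0∞)⁻¹ * c ^ m ≤
                  (if some (Sum.inl (j, (0 : Fin 2))) = t then 0
                    else (n : ℝ≥0∞)⁻¹) * f m (some (Sum.inl (j, 0))) := by
              intro j hj
              have hji : j ≠ i := Finset.ne_of_mem_erase hj
              have hne : some (Sum.inl (j, (0 : Fin 2))) ≠ t := by simp [ht, hji]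
              rw [if_neg hne]
              exact mul_le_mul_right (ih _ (by simp [hji]) (by simp [ht, hji])) _
            have hcast : ((n - 1 : ℕ) : ℝ≥0∞) = (n : ℝ≥0∞) - 1 := by
              rw [ENNReal.natCast_sub, Nat.cast_one]
            calc c ^ (m + 1) = ((n : ℝ≥0∞) - 1) * ((n : ℝ≥0∞)⁻¹ * c ^ m) := by
                  rw [← mul_assoc]
                  rw [ENNReal.sub_mul (fun _ _ => ENNReal.inv_ne_top.mpr hn0), hmulinv, one_mul,
                    hc, pow_succ, mul_comm]
              _ = ((n - 1 : ℕ) : ℝ≥0∞) * ((n : ℝ≥0∞)⁻¹ * c ^ m) := by rw [hcast]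
              _ = ∑ _j ∈ Finset.univ.erase i, (n : ℝ≥0∞)⁻¹ * c ^ m := by
                  rw [Finset.sum_const, Finset.card_erase_of_mem (Finset.mem_univ i),
                    Finset.card_univ, Fintype.card_fin, nsmul_eq_mul]
              _ ≤ ∑ j ∈ Finset.univ.erase i,
                    (if some (Sum.inl (j, (0 : Fin 2))) = t then 0
                      else (n : ℝ≥0∞)⁻¹) * f m (some (Sum.inl (j, 0))) :=
                  Finset.sum_le_sum hsub
              _ ≤ ∑ j : Fin n,
                    (if some (Sum.inl (j, (0 : Fin 2))) = t then 0
                      else (n : ℝ≥0∞)⁻¹) * f m (some (Sum.inl (j, 0))) :=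
                  Finset.sum_le_sum_of_subset (Finset.erase_subset _ _)
          | some (Sum.inl (j, k)), hs0, hst, hπ' =>
            match k, hs0, hst, hπ' with
            | 0, hs0, _, hπ' =>
              have hji : j ≠ i := by
                intro h; exact hs0 (by rw [h])
              rw [starQ_mulVec_l0 j hπ' (by simp [ht, hji])]
              exact le_trans hstep (ih _ (by simp) (by simp [ht, hji]))
            | 1, _, hst, hπ' =>
              rw [starQ_mulVec_l1 j hπ' hyt]
              exact le_trans hstep (ih _ (by simp) hyt)
          | some (Sum.inr ()), _, _, hπ' =>
            rw [starQ_mulVec_y hπ' hyt]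
            exact le_trans hstep (ih _ (by simp) hyt)
    have hgeo : ∑' m : ℕ, c ^ m = (n : ℝ≥0∞) := by
      rw [ENNReal.tsum_geometric, hc,
        ENNReal.sub_sub_cancel ENNReal.one_ne_top
          (ENNReal.inv_le_one.mpr (by exact_mod_cast Nat.one_le_of_lt hn)), inv_inv]
    calc (n : ℝ≥0∞) = ∑' m : ℕ, c ^ m := hgeo.symm
      _ ≤ starHit n π t := by
          rw [starHit_eq]
          exact ENNReal.tsum_le_tsum fun m => key m none (by simp) hnonet
end
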